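/- For any partitions β and α, the composition D_β ∘ U_α equals the sum over all partitions λ of U_{s_{α/λ}} ∘ D_{s_{β/λ}}, where U_f is multiplication by f and D_f is its adjoint with respect to the Hall inner product on symmetric functions. -/

import Mathlib

/-!
Let `Δ h = ∑_λ s_λ ⊗ D_{s_λ} h`, the adjoint of multiplication `Λ ⊗ Λ → Λ` for the Hall inner
product, so that `Δ s_β = ∑_λ s_λ ⊗ s_{β/λ}`. The theorem is the case `h = s_β` of the Leibniz
rule `D_h (f g) = ∑ D_{h₁} f · D_{h₂} g` (Sweedler notation for `Δ h`). Both sides are linear in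
`h`; the rule holds for `h = 1` because `⟨1, f g⟩ = ⟨1, f⟩ ⟨1, g⟩`, and it passes from `h` to
`h p_k` because `D_{p_k}` is a derivation (from `D_{p_k} p_μ = k m_k(μ) p_{μ ∖ k}`), which also
gives `Δ (h p_k) = Δ h · (p_k ⊗ 1 + 1 ⊗ p_k)`. Since the `p_μ` are products of the `p_k`, the rule
holds for every `h`.
-/

open scoped TensorProduct Classical

noncomputable section

/-- The single-row Young diagram with `k` boxes, whose Schur function is `h_k`
and whose power sum is `p_k`. -/
def rowDiagram (k : ℕ) : YoungDiagram :=
  YoungDiagram.ofRowLens [k] ((List.pairwise_singleton _ k).sortedGE)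

/-- The quantity `z_λ = ∏ i^{m_i} m_i!` attached to a partition (Young diagram). -/
def zee (μ : YoungDiagram) : ℚ :=
  ((μ.rowLens.prod * (μ.rowLens.dedup.map fun i => (μ.rowLens.count i).factorial).prod : ℕ) : ℚ)

/-- The ring of symmetric functions over `ℚ`, presented with its Schur basis `s`,
its power-sum basis `p`, the Hall inner product (for which the Schur functions are
orthonormal and `⟨p_λ, p_μ⟩ = δ_{λμ} z_λ`), the skewing operators `D f` (adjoint of
multiplication by `f`), and the Kronecker product `kron`
(determined by `p_λ ∗ p_μ = δ_{λμ} z_λ p_λ`). -/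
structure SymmFn (Λ : Type*) [CommRing Λ] [Algebra ℚ Λ] where
  /-- the Schur basis -/
  s : Module.Basis YoungDiagram ℚ Λ
  /-- the power-sum basis -/
  p : Module.Basis YoungDiagram ℚ Λ
  /-- the Hall inner product -/
  inner : Λ →ₗ[ℚ] Λ →ₗ[ℚ] ℚ
  inner_symm : ∀ f g, inner f g = inner g f
  inner_schur : ∀ μ ν, inner (s μ) (s ν) = if μ = ν then 1 else 0
  inner_power : ∀ μ ν, inner (p μ) (p ν) = if μ = ν then zee μ else 0
  power_mul : ∀ μ : YoungDiagram, p μ = (μ.rowLens.map fun k => p (rowDiagram k)).prod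
  /-- the skewing operator `D f`, adjoint of multiplication by `f` -/
  D : Λ → Λ →ₗ[ℚ] Λ
  D_adjoint : ∀ f g h, inner (D f g) h = inner g (f * h)
  /-- the Kronecker (internal) product -/
  kron : Λ →ₗ[ℚ] Λ →ₗ[ℚ] Λ
  kron_power : ∀ μ ν, kron (p μ) (p ν) = if μ = ν then zee μ • p μ else 0

namespace SymmFn

variable {Λ : Type*} [CommRing Λ] [Algebra ℚ Λ] (S : SymmFn Λ)

/-- The operator `U f` of multiplication by `f`. -/
def U (_S : SymmFn Λ) (f : Λ) : Λ →ₗ[ℚ] Λ := LinearMap.mulLeft ℚ f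

/-- The skew Schur function `s_{α/θ} = D_{s_θ}(s_α)`. -/
def skew (α θ : YoungDiagram) : Λ := S.D (S.s θ) (S.s α)

end SymmFn

namespace YoungDiagram

theorem rowLens_bot : (⊥ : YoungDiagram).rowLens = [] := by
  simp [rowLens, colLen]

theorem coe_rowLens_injective :
    Function.Injective fun μ : YoungDiagram => (μ.rowLens : Multiset ℕ) :=
  fun μ ν h => equivListRowLens.injective <| Subtype.ext <|
    (Multiset.coe_eq_coe.mp h).eq_of_sortedGE μ.rowLens_sorted ν.rowLens_sorted

theorem exists_coe_rowLens_eq {m : Multiset ℕ} (hm : ∀ x ∈ m, 0 < x) :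
    ∃ μ : YoungDiagram, (μ.rowLens : Multiset ℕ) = m :=
  ⟨ofRowLens (m.sort (· ≥ ·)) (m.pairwise_sort _).sortedGE, by
    rw [rowLens_ofRowLens_eq_self fun x hx => hm x ((m.mem_sort _).mp hx), Multiset.sort_eq]⟩

end YoungDiagram

def multisetZee (m : Multiset ℕ) : ℕ := m.prod * ∏ i ∈ m.toFinset, (m.count i).factorial

theorem zee_eq_multisetZee (μ : YoungDiagram) : zee μ = multisetZee μ.rowLens := by
  rw [zee, multisetZee, Multiset.prod_coe, List.toFinset_coe,
    show μ.rowLens.toFinset = μ.rowLens.dedup.toFinset by ext; simp,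
    List.prod_toFinset _ μ.rowLens.nodup_dedup]
  simp

theorem multisetZee_cons (k : ℕ) (m : Multiset ℕ) :
    multisetZee (k ::ₘ m) = k * (m.count k + 1) * multisetZee m := by
  have hk : k ∈ (k ::ₘ m).toFinset := by simp
  have hext : ∏ i ∈ m.toFinset, (m.count i).factorial =
      ∏ i ∈ (k ::ₘ m).toFinset, (m.count i).factorial :=
    Finset.prod_subset (by simp [Finset.subset_iff]; tauto) fun i _ hi => by
      simp [Multiset.count_eq_zero.mpr (by simpa using hi)]
  rw [multisetZee, multisetZee, hext, ← Finset.mul_prod_erase _ _ hk,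
    ← Finset.mul_prod_erase _ (fun i => (m.count i).factorial) hk,
    Finset.prod_congr rfl fun i hi => by
      rw [Multiset.count_cons_of_ne (Finset.ne_of_mem_erase hi)]]
  simp only [Multiset.prod_cons, Multiset.count_cons_self, Nat.factorial_succ]
  ring

namespace SymmFn

variable {Λ : Type*} [CommRing Λ] [Algebra ℚ Λ] (S : SymmFn Λ)

theorem inner_s_right (f : Λ) (ν : YoungDiagram) : S.inner f (S.s ν) = S.s.repr f ν := by
  have : S.inner.flip (S.s ν) = Finsupp.lapply ν ∘ₗ S.s.repr.toLinearMap :=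
    S.s.ext fun μ => by simp [S.inner_schur, Finsupp.single_apply]
  exact LinearMap.congr_fun this f

theorem inner_injective : Function.Injective S.inner := fun x y h =>
  S.s.repr.injective <| Finsupp.ext fun ν => by rw [← inner_s_right, ← inner_s_right, h]

theorem ext_inner {x y : Λ} (h : ∀ z, S.inner x z = S.inner y z) : x = y :=
  S.inner_injective (LinearMap.ext h)

theorem ext_inner_p {x y : Λ} (h : ∀ ν, S.inner x (S.p ν) = S.inner y (S.p ν)) : x = y :=
  S.inner_injective (S.p.ext h)

theorem D_one : S.D 1 = LinearMap.id :=
  LinearMap.ext fun f => S.ext_inner fun z => by rw [S.D_adjoint, one_mul, LinearMap.id_apply]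

theorem D_mul (f g : Λ) : S.D (f * g) = S.D g ∘ₗ S.D f :=
  LinearMap.ext fun x => S.ext_inner fun z => by
    rw [LinearMap.comp_apply, S.D_adjoint, S.D_adjoint, S.D_adjoint, mul_assoc]

theorem D_add (f g : Λ) : S.D (f + g) = S.D f + S.D g :=
  LinearMap.ext fun x => S.ext_inner fun z => by
    rw [LinearMap.add_apply, map_add, LinearMap.add_apply, S.D_adjoint, S.D_adjoint, S.D_adjoint,
      add_mul, map_add]

theorem D_smul (c : ℚ) (f : Λ) : S.D (c • f) = c • S.D f :=
  LinearMap.ext fun x => S.ext_inner fun z => by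
    rw [LinearMap.smul_apply, map_smul, LinearMap.smul_apply, S.D_adjoint, S.D_adjoint,
      smul_mul_assoc, map_smul]

def skewing : Λ →ₗ[ℚ] Λ →ₗ[ℚ] Λ where
  toFun := S.D
  map_add' := S.D_add
  map_smul' := S.D_smul

@[simp] theorem skewing_apply (f : Λ) : S.skewing f = S.D f := rfl

theorem D_zero : S.D 0 = 0 := S.skewing.map_zero

def powerProd (m : Multiset ℕ) : Λ := (m.map fun k => S.p (rowDiagram k)).prod

theorem powerProd_zero : S.powerProd 0 = 1 := by simp [powerProd]

theorem powerProd_cons (k : ℕ) (m : Multiset ℕ) :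
    S.powerProd (k ::ₘ m) = S.p (rowDiagram k) * S.powerProd m := by simp [powerProd]

theorem powerProd_add (a b : Multiset ℕ) :
    S.powerProd (a + b) = S.powerProd a * S.powerProd b := by
  simp [powerProd]

theorem p_eq_powerProd (μ : YoungDiagram) : S.p μ = S.powerProd μ.rowLens := by
  rw [S.power_mul μ, powerProd, Multiset.map_coe, Multiset.prod_coe]

theorem p_bot : S.p ⊥ = 1 := by
  rw [p_eq_powerProd, YoungDiagram.rowLens_bot, Multiset.coe_nil, powerProd_zero]

theorem inner_one_one : S.inner 1 1 = 1 := by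
  rw [← p_bot, S.inner_power, if_pos rfl, zee_eq_multisetZee, YoungDiagram.rowLens_bot]
  simp [multisetZee]

theorem inner_powerProd {a b : Multiset ℕ} (ha : ∀ x ∈ a, 0 < x) (hb : ∀ x ∈ b, 0 < x) :
    S.inner (S.powerProd a) (S.powerProd b) = if a = b then (multisetZee a : ℚ) else 0 := by
  obtain ⟨μ, rfl⟩ := YoungDiagram.exists_coe_rowLens_eq ha
  obtain ⟨ν, rfl⟩ := YoungDiagram.exists_coe_rowLens_eq hb
  rw [← p_eq_powerProd, ← p_eq_powerProd, S.inner_power, zee_eq_multisetZee]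
  by_cases h : μ = ν
  · simp [h]
  · rw [if_neg h, if_neg (YoungDiagram.coe_rowLens_injective.ne h)]

theorem D_p_rowDiagram_powerProd {k : ℕ} (hk : 0 < k) {m : Multiset ℕ} (hm : ∀ x ∈ m, 0 < x) :
    S.D (S.p (rowDiagram k)) (S.powerProd m) =
      ((k * m.count k : ℕ) : ℚ) • S.powerProd (m.erase k) := by
  refine S.ext_inner_p fun ρ => ?_
  have hρ : ∀ x ∈ (ρ.rowLens : Multiset ℕ), 0 < x := ρ.pos_of_mem_rowLens
  rw [p_eq_powerProd S ρ, S.D_adjoint, ← powerProd_cons, map_smul, LinearMap.smul_apply,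
    S.inner_powerProd hm (Multiset.forall_mem_cons.mpr ⟨hk, hρ⟩),
    S.inner_powerProd (fun x hx => hm x (Multiset.mem_of_mem_erase hx)) hρ]
  by_cases hcons : m = k ::ₘ ρ.rowLens
  · subst hcons
    rw [if_pos rfl, Multiset.erase_cons_head, if_pos rfl, Multiset.count_cons_self,
      multisetZee_cons]
    push_cast
    ring
  · rw [if_neg hcons]
    by_cases hkm : k ∈ m
    · rw [if_neg fun h => hcons (by rw [← Multiset.cons_erase hkm, h]), smul_zero]
    · rw [Multiset.count_eq_zero.mpr hkm]
      simp

theorem count_smul_powerProd_erase_add (k : ℕ) (a b : Multiset ℕ) :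
    (a.count k : ℚ) • S.powerProd ((a + b).erase k) =
      (a.count k : ℚ) • S.powerProd (a.erase k + b) := by
  by_cases hk : k ∈ a
  · rw [Multiset.erase_add_left_pos b hk]
  · simp [Multiset.count_eq_zero.mpr hk]

theorem D_p_rowDiagram_mul {k : ℕ} (hk : 0 < k) (x y : Λ) :
    S.D (S.p (rowDiagram k)) (x * y) =
      S.D (S.p (rowDiagram k)) x * y + x * S.D (S.p (rowDiagram k)) y := by
  set d := S.D (S.p (rowDiagram k))
  have hbilin : (LinearMap.mul ℚ Λ).compr₂ d =
      (LinearMap.mul ℚ Λ).compl₁₂ d LinearMap.id + (LinearMap.mul ℚ Λ).compl₂ d := by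
    refine S.p.ext fun μ => S.p.ext fun ν => ?_
    have hμ : ∀ x ∈ (μ.rowLens : Multiset ℕ), 0 < x := μ.pos_of_mem_rowLens
    have hν : ∀ x ∈ (ν.rowLens : Multiset ℕ), 0 < x := ν.pos_of_mem_rowLens
    simp only [LinearMap.compr₂_apply, LinearMap.add_apply, LinearMap.compl₁₂_apply,
      LinearMap.compl₂_apply, LinearMap.mul_apply', LinearMap.id_apply, p_eq_powerProd]
    rw [← powerProd_add, D_p_rowDiagram_powerProd S hk hμ, D_p_rowDiagram_powerProd S hk hν,
      D_p_rowDiagram_powerProd S hk fun x hx => (Multiset.mem_add.mp hx).elim (hμ x) (hν x),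
      smul_mul_assoc, mul_smul_comm, ← powerProd_add, ← powerProd_add, Multiset.count_add]
    push_cast
    rw [mul_add, add_smul, mul_smul, mul_smul, count_smul_powerProd_erase_add,
      add_comm (μ.rowLens : Multiset ℕ), count_smul_powerProd_erase_add,
      add_comm _ (μ.rowLens : Multiset ℕ)]
    simp only [mul_smul]
  exact LinearMap.congr_fun₂ hbilin x y

theorem D_p_rowDiagram_one {k : ℕ} (hk : 0 < k) : S.D (S.p (rowDiagram k)) 1 = 0 := by
  have h := S.D_p_rowDiagram_mul hk 1 1
  simp only [mul_one, one_mul] at h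
  exact left_eq_add.mp h

theorem inner_one_powerProd_mul {m : Multiset ℕ} (hm : ∀ x ∈ m, 0 < x) (x : Λ) :
    S.inner 1 (S.powerProd m * x) = S.inner 1 (S.powerProd m) * S.inner 1 x := by
  rcases Multiset.empty_or_exists_mem m with rfl | ⟨k, hk⟩
  · rw [powerProd_zero, one_mul, inner_one_one, one_mul]
  · have h : ∀ y, S.inner 1 (S.p (rowDiagram k) * y) = 0 := fun y => by
      rw [← S.D_adjoint, S.D_p_rowDiagram_one (hm k hk), map_zero, LinearMap.zero_apply]
    rw [← Multiset.cons_erase hk, powerProd_cons, mul_assoc, h, h, zero_mul]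

theorem inner_one_mul (f g : Λ) : S.inner 1 (f * g) = S.inner 1 f * S.inner 1 g := by
  have h : (S.inner 1).comp (LinearMap.mulRight ℚ g) = S.inner 1 g • S.inner 1 :=
    S.p.ext fun μ => by
      simpa [p_eq_powerProd, mul_comm] using S.inner_one_powerProd_mul μ.pos_of_mem_rowLens g
  simpa [mul_comm] using LinearMap.congr_fun h f

theorem exists_D_powerProd_powerProd {r m : Multiset ℕ} (hr : ∀ x ∈ r, 0 < x)
    (hm : ∀ x ∈ m, 0 < x) :
    ∃ c : ℚ, S.D (S.powerProd r) (S.powerProd m) = c • S.powerProd (m - r) := by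
  induction r using Multiset.induction_on generalizing m with
  | empty =>
    exact ⟨1, by rw [powerProd_zero, D_one, LinearMap.id_apply, one_smul, Multiset.sub_zero]⟩
  | cons k r ih =>
    obtain ⟨c, hc⟩ := ih (fun x hx => hr x (Multiset.mem_cons_of_mem hx))
      (fun x hx => hm x (Multiset.mem_of_mem_erase hx))
    refine ⟨(k * m.count k : ℕ) * c, ?_⟩
    rw [powerProd_cons, D_mul, LinearMap.comp_apply,
      S.D_p_rowDiagram_powerProd (hr k (Multiset.mem_cons_self k r)) hm, map_smul, hc, smul_smul,
      Multiset.sub_cons]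

theorem finite_setOf_D_s_ne_zero (f : Λ) : {l | S.D (S.s l) f ≠ 0}.Finite := by
  classical
  let N : Finset (Multiset ℕ) :=
    (S.p.repr f).support.biUnion fun μ => (μ.rowLens : Multiset ℕ).powerset.toFinset
  refine (N.finite_toSet.biUnion fun n _ => (S.s.repr (S.powerProd n)).hasFiniteSupport).subset
    fun l hl => ?_
  simp only [Set.mem_iUnion, Finset.mem_coe, Function.mem_support]
  by_contra! hN
  -- `⟨D_{s_l} f, p_ρ⟩ = ⟨D_{p_ρ} f, s_l⟩`, and `D_{p_ρ}` sends each `p_μ` to a multiple of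
  -- `p_{μ - ρ}`, whose `s_l`-coordinate vanishes by `hN`.
  refine hl (S.ext_inner_p fun ρ => ?_)
  rw [S.D_adjoint, map_zero, LinearMap.zero_apply, mul_comm, ← S.D_adjoint, inner_s_right,
    ← S.p.linearCombination_repr f, Finsupp.linearCombination_apply, Finsupp.sum, map_sum,
    map_sum, Finsupp.finsetSum_apply]
  refine Finset.sum_eq_zero fun μ hμ => ?_
  obtain ⟨c, hc⟩ := S.exists_D_powerProd_powerProd (r := ρ.rowLens) (m := μ.rowLens)
    ρ.pos_of_mem_rowLens μ.pos_of_mem_rowLens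
  have hsub : (μ.rowLens : Multiset ℕ) - ρ.rowLens ∈ N := Finset.mem_biUnion.mpr
    ⟨μ, hμ, Multiset.mem_toFinset.mpr (Multiset.mem_powerset.mpr (Multiset.sub_le_self _ _))⟩
  rw [map_smul, p_eq_powerProd S ρ, p_eq_powerProd S μ, hc, map_smul, map_smul,
    Finsupp.smul_apply, Finsupp.smul_apply, hN _ hsub, smul_zero, smul_zero]

open TensorProduct

theorem finite_support_s_tmul_D_s (h : Λ) :
    (Function.support fun l => S.s l ⊗ₜ[ℚ] S.D (S.s l) h).Finite :=
  (S.finite_setOf_D_s_ne_zero h).subset fun l hl hD => hl (by simp [hD])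

def comul : Λ →ₗ[ℚ] Λ ⊗[ℚ] Λ where
  toFun h := ∑ᶠ l, S.s l ⊗ₜ[ℚ] S.D (S.s l) h
  map_add' h₁ h₂ := by
    simp only [map_add, tmul_add]
    exact finsum_add_distrib (S.finite_support_s_tmul_D_s h₁) (S.finite_support_s_tmul_D_s h₂)
  map_smul' c h := by
    simp only [map_smul, tmul_smul, RingHom.id_apply]
    exact (smul_finsum' c (S.finite_support_s_tmul_D_s h)).symm

theorem comul_apply (h : Λ) : S.comul h = ∑ᶠ l, S.s l ⊗ₜ[ℚ] S.D (S.s l) h := rfl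

def tensorInner : LinearMap.BilinForm ℚ (Λ ⊗[ℚ] Λ) :=
  LinearMap.BilinForm.tmul S.inner S.inner

theorem tensorInner_tmul (f g x y : Λ) :
    S.tensorInner (f ⊗ₜ g) (x ⊗ₜ y) = S.inner f x * S.inner g y := by
  simp [tensorInner, mul_comm]

theorem tensorInner_comul (f g h : Λ) :
    S.tensorInner (f ⊗ₜ g) (S.comul h) = S.inner h (f * g) := by
  let φ : Λ →ₗ[ℚ] ℚ := S.inner h ∘ₗ LinearMap.mulRight ℚ g
  have hsupp : (Function.support fun l => S.s.repr f l * φ (S.s l)) ⊆ (S.s.repr f).support :=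
    fun l hl => Finsupp.mem_support_iff.mpr (left_ne_zero_of_mul hl)
  calc S.tensorInner (f ⊗ₜ g) (S.comul h)
      = ∑ᶠ l, S.s.repr f l * φ (S.s l) := by
        rw [comul_apply, map_finsum _ (S.finite_support_s_tmul_D_s h)]
        refine finsum_congr fun l => ?_
        rw [tensorInner_tmul, inner_s_right, S.inner_symm, S.D_adjoint]
        rfl
    _ = φ ((S.s.repr f).sum fun l c => c • S.s l) := by
        rw [finsum_eq_sum_of_support_subset _ hsupp, Finsupp.sum, map_sum]
        simp_rw [map_smul, smul_eq_mul]
    _ = S.inner h (f * g) := by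
        rw [← Finsupp.linearCombination_apply, S.s.linearCombination_repr]
        rfl

theorem ext_tensorInner {t t' : Λ ⊗[ℚ] Λ}
    (h : ∀ f g, S.tensorInner (f ⊗ₜ g) t = S.tensorInner (f ⊗ₜ g) t') : t = t' := by
  have hrepr : ∀ ρ σ u,
      S.tensorInner (S.s ρ ⊗ₜ S.s σ) u = (S.s.tensorProduct S.s).repr u (ρ, σ) := by
    intro ρ σ u
    induction u using TensorProduct.induction_on with
    | zero => simp
    | tmul x y =>
      rw [tensorInner_tmul, S.inner_symm, inner_s_right, S.inner_symm, inner_s_right,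
        Module.Basis.tensorProduct_repr_tmul_apply, smul_eq_mul, mul_comm]
    | add u v hu hv => rw [map_add, hu, hv, map_add, Finsupp.add_apply]
  exact (S.s.tensorProduct S.s).repr.injective <| Finsupp.ext fun ⟨ρ, σ⟩ => by
    rw [← hrepr, ← hrepr, h]

theorem tensorInner_mul_tmul (f g x y : Λ) (t : Λ ⊗[ℚ] Λ) :
    S.tensorInner (f ⊗ₜ g) (t * (x ⊗ₜ y)) = S.tensorInner (S.D x f ⊗ₜ S.D y g) t := by
  induction t using TensorProduct.induction_on with
  | zero => simp
  | tmul a b =>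
    rw [Algebra.TensorProduct.tmul_mul_tmul, tensorInner_tmul, tensorInner_tmul, S.D_adjoint,
      S.D_adjoint, mul_comm x, mul_comm y]
  | add u v hu hv => rw [add_mul, map_add, hu, hv, map_add]

theorem comul_one : S.comul 1 = 1 := S.ext_tensorInner fun f g => by
  rw [tensorInner_comul, Algebra.TensorProduct.one_def, tensorInner_tmul, inner_one_mul,
    S.inner_symm f, S.inner_symm g]

theorem comul_mul_p_rowDiagram {k : ℕ} (hk : 0 < k) (h : Λ) :
    S.comul (h * S.p (rowDiagram k)) =
      S.comul h * (S.p (rowDiagram k) ⊗ₜ 1 + 1 ⊗ₜ S.p (rowDiagram k)) :=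
  S.ext_tensorInner fun f g => by
  rw [mul_add, map_add, tensorInner_mul_tmul, tensorInner_mul_tmul, D_one, LinearMap.id_apply,
    LinearMap.id_apply, tensorInner_comul, tensorInner_comul, tensorInner_comul, ← map_add,
    ← S.D_p_rowDiagram_mul hk, S.inner_symm h, S.D_adjoint, mul_comm (S.p _), S.inner_symm]

def skewPair (f g : Λ) : Λ ⊗[ℚ] Λ →ₗ[ℚ] Λ :=
  LinearMap.mul' ℚ Λ ∘ₗ TensorProduct.map (S.skewing.flip f) (S.skewing.flip g)

theorem skewPair_tmul (f g x y : Λ) : S.skewPair f g (x ⊗ₜ y) = S.D x f * S.D y g := rfl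

theorem D_p_rowDiagram_skewPair {k : ℕ} (hk : 0 < k) (f g : Λ) (t : Λ ⊗[ℚ] Λ) :
    S.D (S.p (rowDiagram k)) (S.skewPair f g t) =
      S.skewPair f g (t * (S.p (rowDiagram k) ⊗ₜ 1 + 1 ⊗ₜ S.p (rowDiagram k))) := by
  induction t using TensorProduct.induction_on with
  | zero => simp
  | tmul x y =>
    rw [mul_add, Algebra.TensorProduct.tmul_mul_tmul, Algebra.TensorProduct.tmul_mul_tmul,
      mul_one, mul_one, map_add, skewPair_tmul, skewPair_tmul, skewPair_tmul,
      S.D_p_rowDiagram_mul hk, D_mul, D_mul, LinearMap.comp_apply, LinearMap.comp_apply]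
  | add u v hu hv => rw [map_add, map_add, hu, hv, add_mul, map_add]

theorem D_powerProd_mul_eq_skewPair_comul {m : Multiset ℕ} (hm : ∀ x ∈ m, 0 < x) (f g : Λ) :
    S.D (S.powerProd m) (f * g) = S.skewPair f g (S.comul (S.powerProd m)) := by
  induction m using Multiset.induction_on with
  | empty =>
    rw [powerProd_zero, comul_one, Algebra.TensorProduct.one_def, skewPair_tmul, D_one]
    rfl
  | cons k m ih =>
    obtain ⟨hk, hm⟩ := Multiset.forall_mem_cons.mp hm
    rw [powerProd_cons, mul_comm, D_mul, LinearMap.comp_apply, ih hm,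
      D_p_rowDiagram_skewPair S hk, comul_mul_p_rowDiagram S hk]

theorem D_mul_eq_skewPair_comul (h f g : Λ) : S.D h (f * g) = S.skewPair f g (S.comul h) := by
  suffices hlin : S.skewing.flip (f * g) = S.skewPair f g ∘ₗ S.comul from
    LinearMap.congr_fun hlin h
  exact S.p.ext fun μ => by
    simpa [p_eq_powerProd] using S.D_powerProd_mul_eq_skewPair_comul μ.pos_of_mem_rowLens f g

/-- Commutation relation `D_β ∘ U_α = ∑_λ U_{s_{α/λ}} ∘ D_{s_{β/λ}}`. -/
theorem skewing_comp_mul (α β : YoungDiagram) :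
    (S.D (S.s β)) ∘ₗ (S.U (S.s α)) =
      ∑ᶠ l : YoungDiagram, (S.U (S.skew α l)) ∘ₗ (S.D (S.skew β l)) := by
  have hfin : (Function.support fun l => S.U (S.skew α l) ∘ₗ S.D (S.skew β l)).Finite :=
    (S.finite_setOf_D_s_ne_zero (S.s β)).subset fun l hl h0 =>
      hl (by simp only [skew, h0, D_zero, LinearMap.comp_zero])
  refine LinearMap.ext fun g => ?_
  calc S.D (S.s β) (S.s α * g)
      = S.skewPair (S.s α) g (S.comul (S.s β)) := S.D_mul_eq_skewPair_comul _ _ _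
    _ = ∑ᶠ l, S.skew α l * S.D (S.skew β l) g := map_finsum _ (S.finite_support_s_tmul_D_s _)
    _ = (∑ᶠ l, S.U (S.skew α l) ∘ₗ S.D (S.skew β l)) g :=
        (map_finsum (LinearMap.applyₗ (R := ℚ) g) hfin).symm

end SymmFn
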